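/- For every integer n ≥ 6, χ_td(KG(n,2)) ≤ n. -/

import Mathlib

/-- The vertex type of the Kneser graph `KG(n,2)`: 2-element subsets of `{0,…,n-1}`. -/
abbrev KVert (n : ℕ) := {s : Finset (Fin n) // s.card = 2}

/-- The Kneser graph `KG(n,2)`: vertices are 2-subsets, adjacent iff disjoint. -/
def KG2 (n : ℕ) : SimpleGraph (KVert n) where
  Adj u v := Disjoint u.1 v.1
  symm := ⟨fun (u v : KVert n) (h : Disjoint u.1 v.1) => h.symm⟩
  loopless := ⟨fun (u : KVert n) (h : Disjoint u.1 u.1) => by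
    have h2 := u.2
    have h' : Disjoint u.1 u.1 := h
    rw [disjoint_self] at h'
    simp [h'] at h2⟩

/-- A proper coloring of `G` with `k` (nonempty) color classes: a partition of the
vertex set into `k` nonempty independent sets. -/
def IsProperColoring {V : Type*} (G : SimpleGraph V) {k : ℕ} (C : Fin k → Set V) : Prop :=
  (∀ v, ∃! i, v ∈ C i) ∧ (∀ i, (C i).Nonempty) ∧
    ∀ i, ∀ u ∈ C i, ∀ w ∈ C i, ¬ G.Adj u w

/-- A total dominator coloring: a proper coloring such that every vertex is adjacent to
all vertices of some (nonempty) color class. -/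
def IsTDColoring {V : Type*} (G : SimpleGraph V) {k : ℕ} (C : Fin k → Set V) : Prop :=
  IsProperColoring G C ∧ ∀ v, ∃ i, (C i).Nonempty ∧ ∀ u ∈ C i, G.Adj v u

/-- The chromatic number: minimum number of color classes in a proper coloring. -/
noncomputable def chromNum {V : Type*} (G : SimpleGraph V) : ℕ :=
  sInf {k | ∃ C : Fin k → Set V, IsProperColoring G C}

/-- The total dominator chromatic number: minimum number of color classes in a TDC. -/
noncomputable def tdChromNum {V : Type*} (G : SimpleGraph V) : ℕ :=
  sInf {k | ∃ C : Fin k → Set V, IsTDColoring G C}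

/-- A total dominating set: every vertex has a neighbor in `S`. -/
def IsTotalDomSet {V : Type*} (G : SimpleGraph V) (S : Set V) : Prop :=
  ∀ v, ∃ u ∈ S, G.Adj v u

/-- The total domination number: minimum size of a total dominating set. -/
noncomputable def totalDomNum {V : Type*} [Fintype V] (G : SimpleGraph V) : ℕ :=
  sInf {k | ∃ S : Finset V, IsTotalDomSet G ↑S ∧ S.card = k}

/-- A set of vertices of `KG(n,2)` is starlike if all its 2-subsets share a common symbol. -/
def Starlike {n : ℕ} (A : Set (KVert n)) : Prop :=
  ∃ a : Fin n, ∀ v ∈ A, a ∈ v.1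

/-- A set of vertices of `KG(n,2)` is triangular if it equals `{{a,b},{a,c},{b,c}}`
for three distinct symbols `a, b, c`. -/
def Triangular {n : ℕ} (A : Set (KVert n)) : Prop :=
  ∃ a b c : Fin n, a ≠ b ∧ a ≠ c ∧ b ≠ c ∧
    A = {v : KVert n | v.1 = {a, b} ∨ v.1 = {a, c} ∨ v.1 = {b, c}}

/-! Colour `KG(6,2)` by sending a pair to the first of the six triples `{0,4,5}, {1,3,4}, {1,2,5},
{0,2,4}, {2,3,5}, {0,1,3}` containing it. Each class lies in a triple, so any two of its pairs
meet and the colouring is proper; every pair of symbols misses one of the triples, so it is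
adjacent to the whole class of that triple. To pass from `n ≥ 2` to `n + 1` symbols, put all pairs
through the new symbol into one new class (a star, hence independent). A pair meets the old
symbols in at most two of them, which extend to a pair of `KG(n,2)`; whichever old class dominates
that pair also dominates the new one. -/

instance (n : ℕ) : DecidableRel (KG2 n).Adj :=
  fun u v => inferInstanceAs (Decidable (Disjoint u.1 v.1))

namespace SimpleGraph.Coloring

variable {V α : Type*} {G : SimpleGraph V}

def IsTotalDominator (c : G.Coloring α) : Prop :=
  Function.Surjective c ∧ ∀ v, ∃ a, ∀ u, c u = a → G.Adj v u

theorem IsTotalDominator.tdChromNum_le {k : ℕ} {c : G.Coloring (Fin k)}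
    (hc : c.IsTotalDominator) : tdChromNum G ≤ k := by
  have hne (a : Fin k) : (c.colorClass a).Nonempty := (hc.1 a).imp fun _ ↦ id
  refine Nat.sInf_le ⟨c.colorClass, ⟨fun v ↦ ⟨c v, rfl, fun _ ↦ Eq.symm⟩, hne,
    fun a _ hu _ hw ↦ c.not_adj_of_mem_colorClass hu hw⟩, fun v ↦ ?_⟩
  obtain ⟨a, ha⟩ := hc.2 v
  exact ⟨a, hne a, ha⟩

end SimpleGraph.Coloring

open SimpleGraph Finset

section StarExtension

variable {n k : ℕ}

lemma Fin.map_castSuccEmb_preimage {s : Finset (Fin (n + 1))} (hs : Fin.last n ∉ s) :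
    (s.preimage Fin.castSuccEmb Fin.castSuccEmb.injective.injOn).map Fin.castSuccEmb = s := by
  ext x
  simp only [mem_map, mem_preimage]
  refine ⟨fun ⟨y, hy, hyx⟩ ↦ hyx ▸ hy, fun hx ↦ ?_⟩
  obtain ⟨y, rfl⟩ := Fin.exists_castSucc_eq.2 (ne_of_mem_of_not_mem hx hs)
  exact ⟨y, hx, rfl⟩

lemma Fin.disjoint_of_disjoint_preimage_castSucc {s t : Finset (Fin (n + 1))}
    (ht : Fin.last n ∉ t)
    (h : Disjoint (s.preimage Fin.castSuccEmb Fin.castSuccEmb.injective.injOn)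
      (t.preimage Fin.castSuccEmb Fin.castSuccEmb.injective.injOn)) : Disjoint s t := by
  refine disjoint_left.2 fun x hxs hxt ↦ ?_
  obtain ⟨y, rfl⟩ := Fin.exists_castSucc_eq.2 (ne_of_mem_of_not_mem hxt ht)
  exact disjoint_left.1 h (mem_preimage.2 hxs) (mem_preimage.2 hxt)

def KVert.castSucc (v : KVert n) : KVert (n + 1) :=
  ⟨v.1.map Fin.castSuccEmb, by rw [card_map, v.2]⟩

noncomputable def KVert.castPred (v : KVert (n + 1)) (hv : Fin.last n ∉ v.1) : KVert n :=
  ⟨v.1.preimage Fin.castSuccEmb Fin.castSuccEmb.injective.injOn, by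
    rw [← card_map Fin.castSuccEmb, Fin.map_castSuccEmb_preimage hv, v.2]⟩

lemma KVert.castPred_castSucc (v : KVert n) :
    KVert.castPred (KVert.castSucc v) (by simp [KVert.castSucc]) = v :=
  Subtype.ext (preimage_map _ _)

noncomputable def starExtension (c : (KG2 n).Coloring (Fin k)) :
    (KG2 (n + 1)).Coloring (Fin (k + 1)) :=
  Coloring.mk
    (fun v ↦ if hv : Fin.last n ∈ v.1 then Fin.last k else (c (KVert.castPred v hv)).castSucc)
    (by
      intro u w huw
      split_ifs with hu hw hw
      · exact fun _ ↦ Finset.disjoint_left.1 huw hu hw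
      · exact (Fin.castSucc_ne_last _).symm
      · exact Fin.castSucc_ne_last _
      · exact (Fin.castSucc_injective k).ne (c.valid (disjoint_preimage
          (hs := Fin.castSuccEmb.injective.injOn) (ht := Fin.castSuccEmb.injective.injOn) huw)))

lemma starExtension_apply_of_mem (c : (KG2 n).Coloring (Fin k)) {v : KVert (n + 1)}
    (hv : Fin.last n ∈ v.1) : starExtension c v = Fin.last k :=
  dif_pos hv

lemma starExtension_apply_of_notMem (c : (KG2 n).Coloring (Fin k)) {v : KVert (n + 1)}
    (hv : Fin.last n ∉ v.1) : starExtension c v = (c (KVert.castPred v hv)).castSucc :=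
  dif_neg hv

theorem SimpleGraph.Coloring.IsTotalDominator.starExtension {c : (KG2 n).Coloring (Fin k)}
    (hc : c.IsTotalDominator) (hn : 2 ≤ n) : (starExtension c).IsTotalDominator := by
  constructor
  · intro a
    induction a using Fin.lastCases with
    | last =>
      obtain ⟨t, hlast, ht⟩ := exists_superset_card_eq (s := {Fin.last n}) (n := 2)
        (by simp) (by simp; omega)
      exact ⟨⟨t, ht⟩, starExtension_apply_of_mem c (hlast (mem_singleton_self _))⟩
    | cast a =>
      obtain ⟨w, rfl⟩ := hc.1 a
      refine ⟨KVert.castSucc w, ?_⟩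
      rw [starExtension_apply_of_notMem c (by simp [KVert.castSucc]), KVert.castPred_castSucc]
  · intro v
    set p := v.1.preimage Fin.castSuccEmb Fin.castSuccEmb.injective.injOn
    have hp : p.card ≤ 2 := by
      rw [← card_map Fin.castSuccEmb, ← v.2]
      exact card_le_card (map_subset_iff_subset_preimage.2 subset_rfl)
    obtain ⟨t, hpt, ht⟩ := exists_superset_card_eq hp (by simpa using hn)
    obtain ⟨a, ha⟩ := hc.2 ⟨t, ht⟩
    refine ⟨a.castSucc, fun u hu ↦ ?_⟩
    have hlast : Fin.last n ∉ u.1 := fun h ↦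
      Fin.castSucc_ne_last a (hu.symm.trans (starExtension_apply_of_mem c h))
    rw [starExtension_apply_of_notMem c hlast, (Fin.castSucc_injective k).eq_iff] at hu
    have htu : Disjoint t (KVert.castPred u hlast).1 := ha _ hu
    exact Fin.disjoint_of_disjoint_preimage_castSucc hlast (htu.mono_left hpt)

end StarExtension

def sixTriples : Fin 6 → Finset (Fin 6) :=
  ![{0, 4, 5}, {1, 3, 4}, {1, 2, 5}, {0, 2, 4}, {2, 3, 5}, {0, 1, 3}]

def sixColor (s : Finset (Fin 6)) : Fin 6 :=
  if s ⊆ sixTriples 0 then 0 else if s ⊆ sixTriples 1 then 1 else if s ⊆ sixTriples 2 then 2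
  else if s ⊆ sixTriples 3 then 3 else if s ⊆ sixTriples 4 then 4 else 5

def kneserSixColoring : (KG2 6).Coloring (Fin 6) :=
  Coloring.mk (fun v ↦ sixColor v.1) (by decide)

theorem kneserSixColoring_isTotalDominator : kneserSixColoring.IsTotalDominator :=
  ⟨by decide, by decide⟩

theorem exists_isTotalDominator_coloring_kneser {n : ℕ} (hn : 6 ≤ n) :
    ∃ c : (KG2 n).Coloring (Fin n), c.IsTotalDominator := by
  induction n, hn using Nat.le_induction with
  | base => exact ⟨_, kneserSixColoring_isTotalDominator⟩
  | succ n hn ih =>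
    obtain ⟨c, hc⟩ := ih
    exact ⟨_, hc.starExtension (by omega)⟩

/-- For every `n ≥ 6`, `χ_td(KG(n,2)) ≤ n`. -/
theorem stmt8 (n : ℕ) (hn : 6 ≤ n) :
    tdChromNum (KG2 n) ≤ n := by
  obtain ⟨c, hc⟩ := exists_isTotalDominator_coloring_kneser hn
  exact hc.tdChromNum_le
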